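/- arXiv:2605.12235 — 4 statements merged into one kernel-verified Lean document; each statement's English description precedes it below -/
import Mathlib

section
/- Let λ* ≥ 0 and ν* ≥ 0, and let π*(x) = 1{τ(x) − λ*·c(x) + ν* ≥ 0}. If π* is feasible, i.e. ∫ π* c dμ ≤ C and ∫ π* dμ ≥ ρ, and the complementary slackness conditions λ*·(∫ π* c dμ − C) = 0 and ν*·(ρ − ∫ π* dμ) = 0 hold, then for every feasible policy π one has ∫ π τ dμ ≤ ∫ π* τ dμ; that is, the affine threshold policy π* maximizes welfare over the feasible set. -/
/-!
Weak Lagrangian duality. With `g = τ - λ c + ν`, the threshold policy `1{g ≥ 0}` maximizes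
`∫ π g` pointwise over all policies with values in `[0, 1]`. Expanding
`∫ π g = ∫ τ π - λ ∫ π c + ν ∫ π`, any feasible `π` satisfies `λ ∫ π c ≤ λ C` and `ν ∫ π ≥ ν ρ`,
while complementary slackness turns both into equalities for the threshold policy.
-/

open MeasureTheory Set

namespace ThresholdPolicy

lemma mem_Icc_of_eq_zero_or_eq_one {p : ℝ} (h : p = 0 ∨ p = 1) : p ∈ Icc (0 : ℝ) 1 := by
  rcases h with rfl | rfl <;> simp

variable {𝒳 : Type*}

noncomputable def threshold (g : 𝒳 → ℝ) : 𝒳 → ℝ := fun x => if 0 ≤ g x then 1 else 0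

lemma threshold_mem_Icc (g : 𝒳 → ℝ) (x : 𝒳) : threshold g x ∈ Icc (0 : ℝ) 1 := by
  unfold threshold; split_ifs <;> simp

lemma mul_le_threshold_mul {p : ℝ} (hp : p ∈ Icc (0 : ℝ) 1) (g : 𝒳 → ℝ) (x : 𝒳) :
    p * g x ≤ threshold g x * g x := by
  unfold threshold
  split_ifs with h
  · nlinarith [hp.2]
  · nlinarith [hp.1]

variable [MeasurableSpace 𝒳] {μ : Measure 𝒳}

lemma aestronglyMeasurable_threshold {g : 𝒳 → ℝ} (hg : AEMeasurable g μ) :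
    AEStronglyMeasurable (threshold g) μ := by
  have h : threshold g = (Ici (0 : ℝ)).indicator 1 ∘ g := by
    ext x; simp [threshold, indicator_apply]
  rw [h]
  exact ((measurable_const.indicator measurableSet_Ici).comp_aemeasurable hg).aestronglyMeasurable

lemma _root_.MeasureTheory.Integrable.mul_of_mem_Icc {π f : 𝒳 → ℝ} (hf : Integrable f μ)
    (hπ : AEStronglyMeasurable π μ) (h01 : ∀ x, π x ∈ Icc (0 : ℝ) 1) :
    Integrable (fun x => π x * f x) μ :=
  hf.bdd_mul hπ (ae_of_all _ fun x => by
    rw [Real.norm_eq_abs, abs_le]; exact ⟨by linarith [(h01 x).1], (h01 x).2⟩)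

lemma integral_mul_le_integral_threshold_mul {π g : 𝒳 → ℝ} (hg : Integrable g μ)
    (hπ : AEStronglyMeasurable π μ) (h01 : ∀ x, π x ∈ Icc (0 : ℝ) 1) :
    ∫ x, π x * g x ∂μ ≤ ∫ x, threshold g x * g x ∂μ :=
  integral_mono (hg.mul_of_mem_Icc hπ h01)
    (hg.mul_of_mem_Icc (aestronglyMeasurable_threshold hg.aemeasurable) (threshold_mem_Icc g))
    fun x => mul_le_threshold_mul (h01 x) g x

lemma integral_mul_lagrangian [IsFiniteMeasure μ] {π τ c : 𝒳 → ℝ} (hτ : Integrable τ μ)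
    (hc : Integrable c μ) (hπ : AEStronglyMeasurable π μ) (h01 : ∀ x, π x ∈ Icc (0 : ℝ) 1)
    (lam ν : ℝ) :
    ∫ x, π x * (τ x - lam * c x + ν) ∂μ =
      ∫ x, τ x * π x ∂μ - lam * ∫ x, π x * c x ∂μ + ν * ∫ x, π x ∂μ := by
  have hπτ : Integrable (fun x => τ x * π x) μ := by
    simpa only [mul_comm] using hτ.mul_of_mem_Icc hπ h01
  have hπc : Integrable (fun x => π x * c x) μ := hc.mul_of_mem_Icc hπ h01
  have hπ1 : Integrable π μ := by
    simpa only [mul_one] using (integrable_const (1 : ℝ)).mul_of_mem_Icc hπ h01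
  have hexpand : (fun x => π x * (τ x - lam * c x + ν)) =
      fun x => (τ x * π x - lam * (π x * c x)) + ν * π x := by
    ext x; ring
  rw [hexpand, integral_add (f := fun x => τ x * π x - lam * (π x * c x))
      (hπτ.sub (hπc.const_mul lam)) (hπ1.const_mul ν),
    integral_sub hπτ (hπc.const_mul lam), integral_const_mul, integral_const_mul]

end ThresholdPolicy

open ThresholdPolicy in
theorem threshold_policy_optimality_general
    {𝒳 : Type*} [MeasurableSpace 𝒳] (μ : Measure 𝒳) [IsProbabilityMeasure μ]
    (τ c : 𝒳 → ℝ) (hτi : Integrable τ μ)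
    (hci : Integrable c μ)
    (C ρ : ℝ)
    (lam ν : ℝ) (hlam : 0 ≤ lam) (hν : 0 ≤ ν)
    (πs : 𝒳 → ℝ)
    (hπs : πs = fun x => if 0 ≤ τ x - lam * c x + ν then (1 : ℝ) else 0)
    (hcs₁ : lam * ((∫ x, πs x * c x ∂μ) - C) = 0)
    (hcs₂ : ν * (ρ - ∫ x, πs x ∂μ) = 0) :
    ∀ π : 𝒳 → ℝ, Measurable π → (∀ x, π x = 0 ∨ π x = 1) →
      (∫ x, π x * c x ∂μ) ≤ C → ρ ≤ (∫ x, π x ∂μ) →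
      (∫ x, τ x * π x ∂μ) ≤ ∫ x, τ x * πs x ∂μ := by
  intro π hπm hπ01 hπC hπρ
  set g : 𝒳 → ℝ := fun x => τ x - lam * c x + ν
  obtain rfl : πs = threshold g := hπs
  have hg : Integrable g μ := (hτi.sub (hci.const_mul lam)).add (integrable_const ν)
  have hπ : ∀ x, π x ∈ Icc (0 : ℝ) 1 := fun x => mem_Icc_of_eq_zero_or_eq_one (hπ01 x)
  have key := integral_mul_le_integral_threshold_mul hg hπm.aestronglyMeasurable hπ
  rw [integral_mul_lagrangian hτi hci hπm.aestronglyMeasurable hπ,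
    integral_mul_lagrangian hτi hci (aestronglyMeasurable_threshold hg.aemeasurable)
      (threshold_mem_Icc g)] at key
  linarith [mul_le_mul_of_nonneg_left hπC hlam, mul_le_mul_of_nonneg_left hπρ hν]

/-- If the affine threshold policy π*(x) = 1{τ(x) − λ* c(x) + ν* ≥ 0}
is feasible and satisfies complementary slackness, then it maximizes welfare
∫ π τ dμ over all feasible measurable binary policies. -/
theorem threshold_policy_optimality
    {𝒳 : Type*} [MeasurableSpace 𝒳] (μ : Measure 𝒳) [IsProbabilityMeasure μ]
    (τ c : 𝒳 → ℝ) (hτm : Measurable τ) (hτi : Integrable τ μ)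
    (hcm : Measurable c) (hci : Integrable c μ) (hcpos : ∀ x, 0 < c x)
    (C ρ : ℝ) (hC : 0 < C) (hρ : ρ ∈ Set.Ioo (0 : ℝ) 1)
    (lam ν : ℝ) (hlam : 0 ≤ lam) (hν : 0 ≤ ν)
    (πs : 𝒳 → ℝ)
    (hπs : πs = fun x => if 0 ≤ τ x - lam * c x + ν then (1 : ℝ) else 0)
    (hfeas₁ : (∫ x, πs x * c x ∂μ) ≤ C)
    (hfeas₂ : ρ ≤ ∫ x, πs x ∂μ)
    (hcs₁ : lam * ((∫ x, πs x * c x ∂μ) - C) = 0)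
    (hcs₂ : ν * (ρ - ∫ x, πs x ∂μ) = 0) :
    ∀ π : 𝒳 → ℝ, Measurable π → (∀ x, π x = 0 ∨ π x = 1) →
      (∫ x, π x * c x ∂μ) ≤ C → ρ ≤ (∫ x, π x ∂μ) →
      (∫ x, τ x * π x ∂μ) ≤ ∫ x, τ x * πs x ∂μ :=
  threshold_policy_optimality_general μ τ c hτi hci C ρ lam ν hlam hν πs hπs hcs₁ hcs₂
end

section
/- Let n ∈ ℕ, w ∈ (0,∞)ⁿ, W ∈ ℝ, K ∈ ℝ, and let P = { z ∈ ℝⁿ : 0 ≤ zᵢ ≤ 1 for all i, Σᵢ wᵢzᵢ ≤ W, Σᵢ zᵢ ≥ K }. Then every extreme point z of the convex set P has at most two fractional coordinates, i.e. the cardinality of { i : 0 < zᵢ < 1 } is at most 2. -/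
private lemma sum_mul_single' {n : ℕ} (w : Fin n → ℝ) (i : Fin n) (c : ℝ) :
    ∑ l, w l * (Pi.single i c : Fin n → ℝ) l = w i * c := by
  rw [Finset.sum_eq_single i]
  · simp
  · intro b _ hb; simp [Pi.single_eq_of_ne hb]
  · simp

private lemma sum_single' {n : ℕ} (i : Fin n) (c : ℝ) :
    ∑ l, (Pi.single i c : Fin n → ℝ) l = c := by
  simpa using sum_mul_single' (fun _ => 1) i c

private lemma perturb {n : ℕ} (w : Fin n → ℝ) (W K : ℝ)
    (P : Set (Fin n → ℝ))
    (hP : P = {z : Fin n → ℝ | (∀ i, 0 ≤ z i ∧ z i ≤ 1) ∧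
      (∑ i, w i * z i) ≤ W ∧ K ≤ ∑ i, z i})
    (z : Fin n → ℝ) (hzP : z ∈ P)
    (d : Fin n → ℝ) (hd0 : d ≠ 0)
    (hsupp : ∀ l, d l ≠ 0 → 0 < z l ∧ z l < 1)
    (hwd : ∑ l, w l * d l = 0) (hsd : ∑ l, d l = 0) :
    z ∉ P.extremePoints ℝ := by
  have hzP' := hzP
  rw [hP] at hzP'
  obtain ⟨hbox, hbud, hcov⟩ := hzP'
  have hne : (Finset.univ : Finset (Fin n)).Nonempty := by
    rcases Function.ne_iff.1 hd0 with ⟨l, -⟩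
    exact ⟨l, Finset.mem_univ l⟩
  set g : Fin n → ℝ := fun l => if d l = 0 then 1 else min (z l) (1 - z l) / |d l| with hg
  set ε : ℝ := Finset.univ.inf' hne g with hε
  have hgpos : ∀ l, 0 < g l := by
    intro l
    by_cases h : d l = 0
    · simp [hg, h]
    · have h1 := hsupp l h
      have hm : 0 < min (z l) (1 - z l) := lt_min h1.1 (by linarith [h1.2])
      simp only [hg, h, if_false]
      exact div_pos hm (abs_pos.2 h)
  have hεpos : 0 < ε := (Finset.lt_inf'_iff hne).2 fun l _ => hgpos l
  have key : ∀ l, -(min (z l) (1 - z l)) ≤ ε * d l ∧ ε * d l ≤ min (z l) (1 - z l) := by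
    intro l
    by_cases h : d l = 0
    · have h1 := hbox l
      have hm : 0 ≤ min (z l) (1 - z l) := le_min h1.1 (by linarith [h1.2])
      refine ⟨?_, ?_⟩ <;> rw [h, mul_zero] <;> linarith
    · have h1 : ε ≤ g l := Finset.inf'_le _ (Finset.mem_univ l)
      have h2 : g l = min (z l) (1 - z l) / |d l| := by simp [hg, h]
      have h3 : 0 < |d l| := abs_pos.2 h
      rw [h2] at h1
      have h4 : ε * |d l| ≤ min (z l) (1 - z l) := by
        calc ε * |d l| ≤ (min (z l) (1 - z l) / |d l|) * |d l| :=
              mul_le_mul_of_nonneg_right h1 h3.le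
          _ = min (z l) (1 - z l) := by field_simp
      have h5 : |ε * d l| ≤ min (z l) (1 - z l) := by
        rwa [abs_mul, abs_of_pos hεpos]
      exact abs_le.1 h5
  -- the two perturbed points
  set x : Fin n → ℝ := z + ε • d with hx
  set y : Fin n → ℝ := z - ε • d with hy
  have hbox' : ∀ l, (0 ≤ x l ∧ x l ≤ 1) ∧ (0 ≤ y l ∧ y l ≤ 1) := by
    intro l
    have h1 := hbox l
    have h2 := key l
    have hxl : x l = z l + ε * d l := rfl
    have hyl : y l = z l - ε * d l := rfl
    have hm1 : min (z l) (1 - z l) ≤ z l := min_le_left _ _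
    have hm2 : min (z l) (1 - z l) ≤ 1 - z l := min_le_right _ _
    refine ⟨⟨?_, ?_⟩, ?_, ?_⟩
    · rw [hxl]; linarith [h2.1]
    · rw [hxl]; linarith [h2.2]
    · rw [hyl]; linarith [h2.2]
    · rw [hyl]; linarith [h2.1]
  have hwx : ∑ l, w l * x l = ∑ l, w l * z l := by
    simp only [hx, Pi.add_apply, Pi.smul_apply, smul_eq_mul, mul_add,
      Finset.sum_add_distrib]
    have : ∑ l, w l * (ε * d l) = ε * ∑ l, w l * d l := by
      rw [Finset.mul_sum]; congr 1; ext l; ring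
    rw [this, hwd]; ring
  have hwy : ∑ l, w l * y l = ∑ l, w l * z l := by
    simp only [hy, Pi.sub_apply, Pi.smul_apply, smul_eq_mul, mul_sub,
      Finset.sum_sub_distrib]
    have : ∑ l, w l * (ε * d l) = ε * ∑ l, w l * d l := by
      rw [Finset.mul_sum]; congr 1; ext l; ring
    rw [this, hwd]; ring
  have hsx : ∑ l, x l = ∑ l, z l := by
    simp only [hx, Pi.add_apply, Pi.smul_apply, smul_eq_mul, Finset.sum_add_distrib,
      ← Finset.mul_sum, hsd]; ring
  have hsy : ∑ l, y l = ∑ l, z l := by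
    simp only [hy, Pi.sub_apply, Pi.smul_apply, smul_eq_mul, Finset.sum_sub_distrib,
      ← Finset.mul_sum, hsd]; ring
  have hxP : x ∈ P := by
    rw [hP]
    exact ⟨fun l => (hbox' l).1, by rw [hwx]; exact hbud, by rw [hsx]; exact hcov⟩
  have hyP : y ∈ P := by
    rw [hP]
    exact ⟨fun l => (hbox' l).2, by rw [hwy]; exact hbud, by rw [hsy]; exact hcov⟩
  intro hext
  have hseg : z ∈ openSegment ℝ x y := by
    refine ⟨1/2, 1/2, by norm_num, by norm_num, by norm_num, ?_⟩
    rw [hx, hy]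
    ext l
    simp only [Pi.add_apply, Pi.smul_apply, Pi.sub_apply, smul_eq_mul]
    ring
  have := (mem_extremePoints.1 hext).2 x hxP y hyP hseg
  have hxz : x ≠ z := by
    rw [hx]
    intro hcon
    apply hd0
    have : ε • d = 0 := by
      have := congrArg (· - z) hcon
      simpa using this
    ext l
    have := congrFun this l
    simp only [Pi.smul_apply, smul_eq_mul, Pi.zero_apply] at this
    have := (mul_eq_zero.1 this).resolve_left hεpos.ne'
    simpa using this
  exact hxz this.1

/-- Every extreme point of the feasible polytope of the LP
relaxation of the 0–1 knapsack problem with minimum coverage (unit hypercube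
intersected with one budget and one coverage inequality) has at most two
fractional coordinates. -/
theorem at_most_two_fractional
    (n : ℕ) (w : Fin n → ℝ) (hw : ∀ i, 0 < w i) (W K : ℝ)
    (P : Set (Fin n → ℝ))
    (hP : P = {z : Fin n → ℝ | (∀ i, 0 ≤ z i ∧ z i ≤ 1) ∧
      (∑ i, w i * z i) ≤ W ∧ K ≤ ∑ i, z i})
    (z : Fin n → ℝ) (hz : z ∈ P.extremePoints ℝ) :
    {i : Fin n | 0 < z i ∧ z i < 1}.ncard ≤ 2 := by
  by_contra hc
  push_neg at hc
  obtain ⟨i, hi, j, hj, k, hk, hij, hik, hjk⟩ :=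
    (Set.two_lt_ncard (Set.toFinite _)).1 hc
  simp only [Set.mem_setOf_eq] at hi hj hk
  have hzP : z ∈ P := hz.1
  by_cases hcase : w i = w j ∧ w j = w k
  · set d : Fin n → ℝ := Pi.single i (1:ℝ) + Pi.single j (-1) with hd
    have hdi : d i = 1 := by simp [hd, Pi.single_eq_of_ne hij]
    refine perturb w W K P hP z hzP d ?_ ?_ ?_ ?_ hz
    · intro h
      have := congrFun h i
      rw [hdi] at this
      simp at this
    · intro l hl
      by_cases h1 : l = i
      · subst h1; exact hi
      by_cases h2 : l = j
      · subst h2; exact hj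
      exfalso; apply hl
      simp [hd, Pi.single_eq_of_ne h1, Pi.single_eq_of_ne h2]
    · have e : ∑ l, w l * d l =
          (∑ l, w l * (Pi.single i (1:ℝ) : Fin n → ℝ) l) +
          ∑ l, w l * (Pi.single j (-1:ℝ) : Fin n → ℝ) l := by
        rw [← Finset.sum_add_distrib]
        refine Finset.sum_congr rfl fun l _ => ?_
        simp [hd]; ring
      rw [e, sum_mul_single', sum_mul_single']
      have := hcase.1
      ring_nf
      linarith
    · have e : ∑ l, d l =
          (∑ l, (Pi.single i (1:ℝ) : Fin n → ℝ) l) +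
          ∑ l, (Pi.single j (-1:ℝ) : Fin n → ℝ) l := by
        rw [← Finset.sum_add_distrib]
        refine Finset.sum_congr rfl fun l _ => ?_
        simp [hd]
      rw [e, sum_single', sum_single']; ring
  · set d : Fin n → ℝ := Pi.single i (w j - w k) + Pi.single j (w k - w i)
      + Pi.single k (w i - w j) with hd
    have hdi : d i = w j - w k := by
      simp [hd, Pi.single_eq_of_ne hij, Pi.single_eq_of_ne hik]
    have hdj : d j = w k - w i := by
      simp [hd, Pi.single_eq_of_ne hij.symm, Pi.single_eq_of_ne hjk]
    have hdk : d k = w i - w j := by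
      simp [hd, Pi.single_eq_of_ne hik.symm, Pi.single_eq_of_ne hjk.symm]
    refine perturb w W K P hP z hzP d ?_ ?_ ?_ ?_ hz
    · intro h
      apply hcase
      have h1 := congrFun h i
      have h2 := congrFun h j
      have h3 := congrFun h k
      rw [hdi] at h1; rw [hdj] at h2; rw [hdk] at h3
      simp only [Pi.zero_apply] at h1 h2 h3
      constructor <;> linarith
    · intro l hl
      by_cases h1 : l = i
      · subst h1; exact hi
      by_cases h2 : l = j
      · subst h2; exact hj
      by_cases h3 : l = k
      · subst h3; exact hk
      exfalso; apply hl
      simp [hd, Pi.single_eq_of_ne h1, Pi.single_eq_of_ne h2, Pi.single_eq_of_ne h3]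
    · have e : ∑ l, w l * d l =
          (∑ l, w l * (Pi.single i (w j - w k) : Fin n → ℝ) l) +
          (∑ l, w l * (Pi.single j (w k - w i) : Fin n → ℝ) l) +
          ∑ l, w l * (Pi.single k (w i - w j) : Fin n → ℝ) l := by
        rw [← Finset.sum_add_distrib, ← Finset.sum_add_distrib]
        refine Finset.sum_congr rfl fun l _ => ?_
        simp [hd]; ring
      rw [e, sum_mul_single', sum_mul_single', sum_mul_single']; ring
    · have e : ∑ l, d l =
          (∑ l, (Pi.single i (w j - w k) : Fin n → ℝ) l) +
          (∑ l, (Pi.single j (w k - w i) : Fin n → ℝ) l) +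
          ∑ l, (Pi.single k (w i - w j) : Fin n → ℝ) l := by
        rw [← Finset.sum_add_distrib, ← Finset.sum_add_distrib]
        refine Finset.sum_congr rfl fun l _ => ?_
        simp [hd]
      rw [e, sum_single', sum_single', sum_single']; ring
end

section
/- Let τ : 𝒳 → ℝ and c : 𝒳 → (0,∞) be functions with c(x) ≤ c̄ for all x, let λ* ≥ 0, ν* ≥ 0, and define r(x) = τ(x)/c(x), b_LP(x) = λ* − ν*/c(x), and the margin m*(x) = τ(x) − λ*·c(x) + ν*. Let t ∈ ℝ and δ ≥ 0 satisfy sup_x |t − b_LP(x)| ≤ δ. Then the misallocation region { x : 1{r(x) ≥ b_LP(x)} ≠ 1{r(x) ≥ t} } is contained in the margin band { x : |m*(x)| ≤ c̄·δ }. -/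
/-- If the constant threshold t is uniformly within δ of the
heterogeneous LP threshold b_LP(x) = λ* − ν*/c(x), then the misallocation
region between the LP rule 1{r(x) ≥ b_LP(x)} and the rank-and-cut rule
1{r(x) ≥ t} is contained in the margin band {x : |m*(x)| ≤ c̄·δ}. -/
theorem misallocation_in_margin_band
    {𝒳 : Type*} (τ c : 𝒳 → ℝ) (hc : ∀ x, 0 < c x)
    (cbar : ℝ) (hcbar : ∀ x, c x ≤ cbar)
    (lam ν : ℝ) (hlam : 0 ≤ lam) (hν : 0 ≤ ν)
    (r bLP m : 𝒳 → ℝ)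
    (hr : ∀ x, r x = τ x / c x)
    (hb : ∀ x, bLP x = lam - ν / c x)
    (hm : ∀ x, m x = τ x - lam * c x + ν)
    (t δ : ℝ) (hδ : 0 ≤ δ)
    (hsup : ∀ x, |t - bLP x| ≤ δ) :
    {x | (if bLP x ≤ r x then (1 : ℝ) else 0) ≠ (if t ≤ r x then (1 : ℝ) else 0)}
      ⊆ {x | |m x| ≤ cbar * δ} := by
  intro x hx
  simp only [Set.mem_setOf_eq] at hx ⊢
  have hcx := hc x
  have hmx : m x = c x * (r x - bLP x) := by
    rw [hm, hr, hb]
    field_simp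
    ring
  -- show |r x - bLP x| ≤ δ
  have key : |r x - bLP x| ≤ δ := by
    by_cases h1 : bLP x ≤ r x <;> by_cases h2 : t ≤ r x <;>
      simp [h1, h2] at hx
    · -- bLP ≤ r < t
      have := hsup x
      rw [abs_le] at this ⊢
      constructor <;> linarith [this.1, this.2]
    · -- t ≤ r < bLP
      have := hsup x
      rw [abs_le] at this ⊢
      constructor <;> linarith [this.1, this.2]
  calc |m x| = c x * |r x - bLP x| := by
        rw [hmx, abs_mul, abs_of_pos hcx]
    _ ≤ cbar * δ := by
        apply mul_le_mul (hcbar x) key (abs_nonneg _)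
        linarith [hcx, hcbar x]
end

section
/- Let (𝒳, μ) be a probability space, let τ : 𝒳 → ℝ be measurable with |τ(x)| ≤ K for μ-a.e. x, let c : 𝒳 → (0,∞) be measurable, let λ* ≥ 0, ν* ≥ 0 and t ∈ ℝ, and define r(x) = τ(x)/c(x), b_LP(x) = λ* − ν*/c(x), m*(x) = τ(x) − λ*·c(x) + ν*, π*(x) = 1{r(x) ≥ b_LP(x)}, and π^RC(x) = 1{r(x) ≥ t}. Assume the functional margin condition holds for the radius u(x) = c(x)·|t − b_LP(x)|, namely μ({ x : |m*(x)| ≤ u(x) }) ≤ C₀·∫ u dμ for a constant C₀ > 0, and that u is μ-integrable. Then the welfare loss of the rank-and-cut rule satisfies |∫ τ·(π* − π^RC) dμ| ≤ K·C₀·∫ c(x)·|t − b_LP(x)| dμ(x). -/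
open MeasureTheory

/-- Welfare loss under threshold misspecification. Under the
functional margin condition with radius u(x) = c(x)|t − b_LP(x)|, the welfare
loss of the rank-and-cut rule relative to the LP rule satisfies
|∫ τ (π* − π^RC) dμ| ≤ K C₀ ∫ c |t − b_LP| dμ. -/
theorem welfare_loss_bound
    {𝒳 : Type*} [MeasurableSpace 𝒳] (μ : Measure 𝒳) [IsProbabilityMeasure μ]
    (τ : 𝒳 → ℝ) (hτm : Measurable τ)
    (K : ℝ) (hτb : ∀ᵐ x ∂μ, |τ x| ≤ K)
    (c : 𝒳 → ℝ) (hcm : Measurable c) (hc : ∀ x, 0 < c x)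
    (lam ν t : ℝ) (hlam : 0 ≤ lam) (hν : 0 ≤ ν)
    (r bLP m u πstar πRC : 𝒳 → ℝ)
    (hr : ∀ x, r x = τ x / c x)
    (hb : ∀ x, bLP x = lam - ν / c x)
    (hm : ∀ x, m x = τ x - lam * c x + ν)
    (hu : ∀ x, u x = c x * |t - bLP x|)
    (hπstar : ∀ x, πstar x = if bLP x ≤ r x then (1 : ℝ) else 0)
    (hπRC : ∀ x, πRC x = if t ≤ r x then (1 : ℝ) else 0)
    (C₀ : ℝ) (hC₀ : 0 < C₀)
    (hui : Integrable u μ)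
    (hmargin : (μ {x | |m x| ≤ u x}).toReal ≤ C₀ * ∫ x, u x ∂μ) :
    |∫ x, τ x * (πstar x - πRC x) ∂μ|
      ≤ K * C₀ * ∫ x, c x * |t - bLP x| ∂μ := by
  have hKnn : 0 ≤ K := by
    haveI : Filter.NeBot (ae μ) := ae_neBot.mpr (IsProbabilityMeasure.ne_zero μ)
    obtain ⟨x, hx⟩ := hτb.exists
    exact le_trans (abs_nonneg _) hx
  have hrm : Measurable r := by
    have h : r = fun x => τ x / c x := funext hr
    rw [h]; exact hτm.div hcm
  have hbm : Measurable bLP := by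
    have h : bLP = fun x => lam - ν / c x := funext hb
    rw [h]; exact measurable_const.sub (measurable_const.div hcm)
  have hmm : Measurable m := by
    have h : m = fun x => τ x - lam * c x + ν := funext hm
    rw [h]; exact ((hτm.sub (hcm.const_mul lam)).add measurable_const)
  have hum : Measurable u := by
    have h : u = fun x => c x * |t - bLP x| := funext hu
    rw [h]; exact hcm.mul ((measurable_const.sub hbm).abs)
  set S : Set 𝒳 := {x | |m x| ≤ u x} with hSdef
  have hSm : MeasurableSet S := measurableSet_le hmm.abs hum
  have hπsm : Measurable πstar := by
    have h : πstar = fun x => if bLP x ≤ r x then (1 : ℝ) else 0 := funext hπstar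
    rw [h]
    exact Measurable.ite (measurableSet_le hbm hrm) measurable_const measurable_const
  have hπRCm : Measurable πRC := by
    have h : πRC = fun x => if t ≤ r x then (1 : ℝ) else 0 := funext hπRC
    rw [h]
    exact Measurable.ite (measurableSet_le measurable_const hrm) measurable_const
      measurable_const
  -- key pointwise fact: if policies differ then x ∈ S
  have hkey : ∀ x, πstar x ≠ πRC x → x ∈ S := by
    intro x hne
    have hcx := hc x
    have hmx : m x = c x * (r x - bLP x) := by
      rw [hm, hr, hb]; field_simp; ring
    have habs : |m x| = c x * |r x - bLP x| := by
      rw [hmx, abs_mul, abs_of_pos hcx]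
    have hux := hu x
    have hmem : |r x - bLP x| ≤ |t - bLP x| → x ∈ S := by
      intro h
      show |m x| ≤ u x
      rw [habs, hux]
      exact mul_le_mul_of_nonneg_left h hcx.le
    by_cases h1 : bLP x ≤ r x <;> by_cases h2 : t ≤ r x
    · exfalso; apply hne; rw [hπstar, hπRC, if_pos h1, if_pos h2]
    · -- bLP ≤ r < t
      apply hmem
      rw [abs_of_nonneg (sub_nonneg.mpr h1)]
      have : r x < t := lt_of_not_ge h2
      have h3 : r x - bLP x ≤ t - bLP x := by linarith
      exact h3.trans (le_abs_self _)
    · -- t ≤ r < bLP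
      apply hmem
      have h1' : r x < bLP x := lt_of_not_ge h1
      rw [abs_of_nonpos (by linarith : r x - bLP x ≤ 0)]
      have h3 : -(r x - bLP x) ≤ -(t - bLP x) := by linarith
      exact h3.trans (neg_le_abs _)
    · exfalso; apply hne; rw [hπstar, hπRC, if_neg h1, if_neg h2]
  -- pointwise bounds
  have hdiff : ∀ x, |πstar x - πRC x| ≤ 1 := by
    intro x
    rw [hπstar, hπRC]
    by_cases h1 : bLP x ≤ r x <;> by_cases h2 : t ≤ r x <;>
      simp [h1, h2]
  have hptwise : ∀ᵐ x ∂μ,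
      |τ x * (πstar x - πRC x)| ≤ S.indicator (fun _ => K) x := by
    filter_upwards [hτb] with x hτx
    by_cases hne : πstar x = πRC x
    · rw [hne, sub_self, mul_zero, abs_zero]
      exact Set.indicator_nonneg (fun _ _ => hKnn) x
    · have hxS : x ∈ S := hkey x hne
      rw [Set.indicator_of_mem hxS]
      calc |τ x * (πstar x - πRC x)| = |τ x| * |πstar x - πRC x| := abs_mul _ _
        _ ≤ K * 1 := mul_le_mul hτx (hdiff x) (abs_nonneg _) hKnn
        _ = K := mul_one K
  -- integrability
  have hfm : AEStronglyMeasurable (fun x => τ x * (πstar x - πRC x)) μ :=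
    (hτm.mul (hπsm.sub hπRCm)).aestronglyMeasurable
  have hfint : Integrable (fun x => τ x * (πstar x - πRC x)) μ := by
    apply Integrable.mono' (integrable_const K) hfm
    filter_upwards [hptwise] with x hx
    calc ‖τ x * (πstar x - πRC x)‖ = |τ x * (πstar x - πRC x)| := rfl
      _ ≤ S.indicator (fun _ => K) x := hx
      _ ≤ K := Set.indicator_le_self' (fun _ _ => hKnn) x |>.trans_eq rfl
  have hind_int : Integrable (S.indicator fun _ => K) μ :=
    (integrable_const K).indicator hSm
  calc |∫ x, τ x * (πstar x - πRC x) ∂μ|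
      ≤ ∫ x, |τ x * (πstar x - πRC x)| ∂μ := by
        simpa only [Real.norm_eq_abs] using
          norm_integral_le_integral_norm (μ := μ) fun x => τ x * (πstar x - πRC x)
    _ ≤ ∫ x, S.indicator (fun _ => K) x ∂μ :=
        integral_mono_ae hfint.abs hind_int hptwise
    _ = (μ S).toReal • K := integral_indicator_const K hSm
    _ = K * (μ S).toReal := by rw [smul_eq_mul, mul_comm]
    _ ≤ K * (C₀ * ∫ x, u x ∂μ) := mul_le_mul_of_nonneg_left hmargin hKnn
    _ = K * C₀ * ∫ x, c x * |t - bLP x| ∂μ := by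
        rw [show (fun x => u x) = fun x => c x * |t - bLP x| from funext hu]
        ring
end
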